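/- Let v, p be smooth in the closed unit disc B̄_1, with v divergence-free, v = e_1 on the boundary circle S_1, and satisfying the Euler equations (v·∇)v + ∇p = 0 in B_1. Then the normal derivative ∂_n p vanishes pointwise on S_1. -/

import Mathlib

open MeasureTheory Metric Complex

noncomputable def gradSq (w : ℂ → ℂ) (z : ℂ) : ℝ :=
  ‖fderiv ℝ w z 1‖ ^ 2 + ‖fderiv ℝ w z Complex.I‖ ^ 2

noncomputable def divg (w : ℂ → ℂ) (z : ℂ) : ℝ :=
  (fderiv ℝ w z 1).re + (fderiv ℝ w z Complex.I).im

noncomputable def lapC (w : ℂ → ℂ) (z : ℂ) : ℂ :=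
  fderiv ℝ (fun y => fderiv ℝ w y 1) z 1 + fderiv ℝ (fun y => fderiv ℝ w y Complex.I) z Complex.I

noncomputable def lapR (p : ℂ → ℝ) (z : ℂ) : ℝ :=
  fderiv ℝ (fun y => fderiv ℝ p y 1) z 1 + fderiv ℝ (fun y => fderiv ℝ p y Complex.I) z Complex.I

noncomputable def gradR (p : ℂ → ℝ) (z : ℂ) : ℂ :=
  (fderiv ℝ p z 1 : ℂ) + (fderiv ℝ p z Complex.I : ℝ) • Complex.I

noncomputable def convec (w : ℂ → ℂ) (z : ℂ) : ℂ :=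
  (w z).re • fderiv ℝ w z 1 + (w z).im • fderiv ℝ w z Complex.I

noncomputable def vort (w : ℂ → ℂ) (z : ℂ) : ℝ :=
  (fderiv ℝ w z Complex.I).re - (fderiv ℝ w z 1).im

def annulus (r1 r2 : ℝ) : Set ℂ := {z | r1 < ‖z‖ ∧ ‖z‖ < r2}

noncomputable def cAvgR (p : ℂ → ℝ) (r : ℝ) : ℝ :=
  (2 * Real.pi)⁻¹ * ∫ θ in (0:ℝ)..(2 * Real.pi), p (circleMap 0 r θ)

noncomputable def cAvgC (w : ℂ → ℂ) (r : ℝ) : ℂ :=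
  (2 * Real.pi)⁻¹ • ∫ θ in (0:ℝ)..(2 * Real.pi), w (circleMap 0 r θ)

theorem euler_pressure_neumann (v : ℂ → ℂ) (p : ℂ → ℝ)
    (hv : ContDiff ℝ (⊤ : ℕ∞) v) (hp : ContDiff ℝ (⊤ : ℕ∞) p)
    (hdiv : ∀ z ∈ closedBall (0:ℂ) 1, divg v z = 0)
    (htr : ∀ z ∈ sphere (0:ℂ) 1, v z = 1)
    (hEuler : ∀ z ∈ ball (0:ℂ) 1, convec v z + gradR p z = 0) :
    ∀ z ∈ sphere (0:ℂ) 1, fderiv ℝ p z z = 0 := by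
  intro z hz
  have hz1 : ‖z‖ = 1 := by simpa using mem_sphere_zero_iff_norm.mp hz
  -- continuity of the partial derivatives
  have hcv : Continuous fun w => fderiv ℝ v w := (hv.fderiv_right (m := (⊤ : ℕ∞)) (by simp)).continuous
  have hcp : Continuous fun w => fderiv ℝ p w := (hp.fderiv_right (m := (⊤ : ℕ∞)) (by simp)).continuous
  have hcv1 : Continuous fun w => fderiv ℝ v w 1 := hcv.clm_apply continuous_const
  have hcvI : Continuous fun w => fderiv ℝ v w Complex.I := hcv.clm_apply continuous_const
  have hcp1 : Continuous fun w => fderiv ℝ p w 1 := hcp.clm_apply continuous_const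
  have hcpI : Continuous fun w => fderiv ℝ p w Complex.I := hcp.clm_apply continuous_const
  have hcont : Continuous fun w => convec v w + gradR p w := by
    unfold convec gradR
    exact ((((Complex.continuous_re.comp hv.continuous).smul hcv1).add ((Complex.continuous_im.comp hv.continuous).smul hcvI)).add
      ((Complex.continuous_ofReal.comp hcp1).add (hcpI.smul continuous_const)))
  -- Euler extends to the sphere by continuity
  have hEz : convec v z + gradR p z = 0 := by
    have hsub : closedBall (0:ℂ) 1 ⊆ {w | convec v w + gradR p w = 0} := by
      rw [← closure_ball (0:ℂ) one_ne_zero]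
      exact closure_minimal hEuler (isClosed_eq hcont continuous_const)
    exact hsub (sphere_subset_closedBall hz)
  -- tangential derivative of v vanishes on the sphere
  have htd : fderiv ℝ v z (z * Complex.I) = 0 := by
    have hzθ : circleMap 0 1 (Complex.arg z) = z := by
      have := Complex.norm_mul_exp_arg_mul_I z
      rw [hz1] at this
      simpa [circleMap] using this
    have h1 : HasDerivAt (circleMap 0 1) (circleMap 0 1 (Complex.arg z) * Complex.I)
        (Complex.arg z) := hasDerivAt_circleMap 0 1 (Complex.arg z)
    have h2 : HasFDerivAt v (fderiv ℝ v z) z := (hv.differentiable (by simp) z).hasFDerivAt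
    have hd : HasDerivAt (fun t => v (circleMap 0 1 t)) (fderiv ℝ v z (z * Complex.I))
        (Complex.arg z) := by
      rw [← hzθ] at h2
      have := h2.comp_hasDerivAt (Complex.arg z) h1
      simp only [hzθ] at this
      exact this
    have hconst : (fun t => v (circleMap 0 1 t)) = fun _ => (1:ℂ) := by
      funext t; exact htr _ (circleMap_mem_sphere (0:ℂ) zero_le_one t)
    rw [hconst] at hd
    exact hd.unique (hasDerivAt_const _ _)
  set L := fderiv ℝ v z with hL
  set P := fderiv ℝ p z with hP
  set a := L 1 with ha
  set b := L Complex.I with hb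
  -- divergence-free at z
  have e3 : a.re + b.im = 0 := hdiv z (sphere_subset_closedBall hz)
  -- tangential: z*I = (-z.im) • 1 + z.re • I
  have hzI : z * Complex.I = (-z.im) • (1:ℂ) + z.re • Complex.I := by
    apply Complex.ext <;> simp
  have e4' : (-z.im) • a + z.re • b = 0 := by
    rw [ha, hb, ← _root_.map_smul, ← _root_.map_smul, ← map_add, ← hzI]; exact htd
  have e4 : -z.im * a.im + z.re * b.im = 0 := by
    have := congrArg Complex.im e4'
    simpa [Complex.add_im, Complex.smul_im] using this
  -- Euler components: v z = 1
  have hvz : v z = 1 := htr z hz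
  have hEz' : a + ((P 1 : ℂ) + (P Complex.I : ℝ) • Complex.I) = 0 := by
    have : convec v z = a := by
      rw [convec, hvz]
      simp [ha, hL]
    rw [← this]
    rw [← hEz, gradR, hP]
  have e1 : a.re + P 1 = 0 := by
    have := congrArg Complex.re hEz'
    simpa [Complex.add_re, Complex.smul_re] using this
  have e2 : a.im + P Complex.I = 0 := by
    have := congrArg Complex.im hEz'
    simpa [Complex.add_im, Complex.smul_im] using this
  -- decompose the goal
  have hzdec : z = z.re • (1:ℂ) + z.im • Complex.I := by
    apply Complex.ext <;> simp
  show P z = 0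
  rw [hzdec, map_add, _root_.map_smul, _root_.map_smul, smul_eq_mul, smul_eq_mul]
  linear_combination z.re * e1 + z.im * e2 - z.re * e3 + e4
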